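/- arXiv:1406.7760 — 2 statements merged into one kernel-verified Lean document; each statement's English description precedes it below -/
import Mathlib

section
/- Let $n \ge 2$, $n' = n/(n-1)$, and $1 < p < n$. For every nonincreasing nonnegative function $g$ on $(0,1)$, the quantity $\| g^{**}(t^{1/n'}) \|_{L^{p'}(0,1)}$, where $g^{**}(u) = u^{-1} \int_0^u g(s)\,ds$ and $p' = p/(p-1)$, is equivalent (with constants depending only on $n$ and $p$) to the Lorentz norm $\|g\|_{L^{p'(n-1)/n, p'}(0,1)} = \big( \int_0^1 \big( t^{n/(p'(n-1)) - 1/p'} g(t) \big)^{p'} dt \big)^{1/p'}$. -/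
/-!
Substituting `t = u ^ n'` turns `‖g**(t^{1/n'})‖_{p'}^{p'}` into
`n' ∫₀¹ u^{n'-1} g**(u)^{p'} du`, while the `p'`-th power of the Lorentz norm is
`∫₀¹ u^{n'-1} g(u)^{p'} du`. Since `g` is nonincreasing, `g ≤ g**`, which gives one
inequality; the other is the weighted Hardy inequality `∫₀¹ u^a (g**)^q ≤ K ∫₀¹ u^a g^q`,
valid for `a < q - 1` (here `a = 1/(n-1)` and `q = p'`, so this is exactly `p < n`).
Hardy's inequality follows from Hölder's inequality on `(0,u)` against a power weight `s^b`
with `a < b < q - 1`, and Tonelli.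
-/

open MeasureTheory Set ENNReal

theorem lintegral_Ioo_zero_rpow {c : ℝ} (hc : -1 < c) {u : ℝ} (hu : 0 < u) :
    ∫⁻ s in Ioo 0 u, ENNReal.ofReal s ^ c = ENNReal.ofReal (u ^ (c + 1) / (c + 1)) := by
  have hint : IntegrableOn (fun s : ℝ => s ^ c) (Ioo 0 u) :=
    (intervalIntegral.integrableOn_Ioo_rpow_iff hu).2 hc
  rw [setLIntegral_congr_fun measurableSet_Ioo fun s hs => ENNReal.ofReal_rpow_of_pos hs.1,
    ← ofReal_integral_eq_lintegral_ofReal hint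
      ((ae_restrict_iff' measurableSet_Ioo).2 (ae_of_all _ fun s hs => Real.rpow_nonneg hs.1.le c)),
    ← integral_Ioc_eq_integral_Ioo, ← intervalIntegral.integral_of_le hu.le,
    integral_rpow (Or.inl hc), Real.zero_rpow (by linarith), sub_zero]

theorem lintegral_Ioi_rpow_of_lt {e : ℝ} (he : e < -1) {s : ℝ} (hs : 0 < s) :
    ∫⁻ u in Ioi s, ENNReal.ofReal u ^ e = ENNReal.ofReal (-s ^ (e + 1) / (e + 1)) := by
  rw [setLIntegral_congr_fun measurableSet_Ioi fun u hu => ENNReal.ofReal_rpow_of_pos (hs.trans hu),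
    ← ofReal_integral_eq_lintegral_ofReal (integrableOn_Ioi_rpow_of_lt he hs)
      ((ae_restrict_iff' measurableSet_Ioi).2
        (ae_of_all _ fun u hu => Real.rpow_nonneg (hs.trans hu).le e)),
    integral_Ioi_rpow_of_lt he hs]

theorem lintegral_Ioo_zero_one_comp_rpow {r α : ℝ} (hr : 0 < r) (hrα : r * α = 1)
    (F : ℝ → ℝ≥0∞) :
    ∫⁻ t in Ioo 0 1, F (t ^ α) =
      ENNReal.ofReal r * ∫⁻ u in Ioo 0 1, ENNReal.ofReal u ^ (r - 1) * F u := by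
  have himage : (· ^ r) '' Ioo (0 : ℝ) 1 = Ioo 0 1 := by
    ext t
    refine ⟨?_, fun ht => ⟨t ^ r⁻¹,
      ⟨Real.rpow_pos_of_pos ht.1 _, Real.rpow_lt_one ht.1.le ht.2 (by positivity)⟩,
      Real.rpow_inv_rpow ht.1.le hr.ne'⟩⟩
    rintro ⟨u, hu, rfl⟩
    exact ⟨Real.rpow_pos_of_pos hu.1 r, Real.rpow_lt_one hu.1.le hu.2 hr⟩
  rw [← lintegral_const_mul' _ _ ofReal_ne_top]
  nth_rw 1 [← himage]
  rw [lintegral_image_eq_lintegral_abs_deriv_mul measurableSet_Ioo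
    (fun u hu => (Real.hasDerivAt_rpow_const (Or.inl hu.1.ne')).hasDerivWithinAt)
    ((Real.rpow_left_injOn hr.ne').mono fun u hu => hu.1.le)]
  refine setLIntegral_congr_fun measurableSet_Ioo fun u hu => ?_
  rw [abs_of_nonneg (by have := hu.1; positivity), ENNReal.ofReal_mul hr.le,
    ← ENNReal.ofReal_rpow_of_pos hu.1, ← Real.rpow_mul hu.1.le, hrα, Real.rpow_one, mul_assoc]

theorem lintegral_Ioo_mul_lintegral_Ioo_swap {w k : ℝ → ℝ≥0∞} (hw : Measurable w)
    (hk : Measurable k) :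
    ∫⁻ u in Ioo 0 1, w u * ∫⁻ s in Ioo 0 u, k s =
      ∫⁻ s in Ioo 0 1, k s * ∫⁻ u in Ioo s 1, w u := by
  set H : ℝ → ℝ → ℝ≥0∞ := fun u s =>
    {p : ℝ × ℝ | p.2 < p.1}.indicator (fun p => w p.1 * k p.2) (u, s)
  have hH : Measurable (Function.uncurry H) :=
    ((hw.comp measurable_fst).mul (hk.comp measurable_snd)).indicator
      (measurableSet_lt measurable_snd measurable_fst)
  have hleft : ∀ u ∈ Ioo (0 : ℝ) 1, w u * ∫⁻ s in Ioo 0 u, k s = ∫⁻ s in Ioo 0 1, H u s := by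
    intro u hu
    have : ∀ s, H u s = w u * (Iio u).indicator k s := fun s => by
      by_cases h : s < u <;> simp [H, h]
    simp_rw [this]
    rw [lintegral_const_mul _ (hk.indicator measurableSet_Iio),
      setLIntegral_indicator measurableSet_Iio, Iio_inter_Ioo, min_eq_left hu.2.le]
  have hright : ∀ s ∈ Ioo (0 : ℝ) 1, k s * ∫⁻ u in Ioo s 1, w u = ∫⁻ u in Ioo 0 1, H u s := by
    intro s hs
    have : ∀ u, H u s = k s * (Ioi s).indicator w u := fun u => by
      by_cases h : s < u <;> simp [H, h, mul_comm]
    simp_rw [this]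
    rw [lintegral_const_mul _ (hw.indicator measurableSet_Ioi),
      setLIntegral_indicator measurableSet_Ioi, Ioi_inter_Ioo, max_eq_left hs.1.le]
  rw [setLIntegral_congr_fun measurableSet_Ioo hleft,
    setLIntegral_congr_fun measurableSet_Ioo hright]
  exact lintegral_lintegral_swap hH.aemeasurable

theorem ENNReal.lintegral_rpow_le_lintegral_mul_rpow_mul {α : Type*} [MeasurableSpace α]
    {μ : Measure α} {q : ℝ} (hq : 1 < q) {G W : α → ℝ≥0∞} (hG : AEMeasurable G μ)
    (hW : AEMeasurable W μ) (hW0 : ∀ᵐ x ∂μ, W x ≠ 0) (hWtop : ∀ᵐ x ∂μ, W x ≠ ⊤) :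
    (∫⁻ x, G x ∂μ) ^ q ≤
      (∫⁻ x, W x * G x ^ q ∂μ) * (∫⁻ x, W x ^ (-(q - 1)⁻¹) ∂μ) ^ (q - 1) := by
  have hq0 : 0 < q := by linarith
  have hconj := Real.HolderConjugate.conjExponent hq
  have hsplit :
      ∫⁻ x, G x ∂μ = ∫⁻ x, ((fun x => W x ^ q⁻¹ * G x) * fun x => W x ^ (-q⁻¹)) x ∂μ := by
    refine lintegral_congr_ae ?_
    filter_upwards [hW0, hWtop] with x h0 htop
    rw [Pi.mul_apply, mul_right_comm, ← ENNReal.rpow_add _ _ h0 htop, add_neg_cancel,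
      ENNReal.rpow_zero, one_mul]
  have hfirst : ∀ x, (W x ^ q⁻¹ * G x) ^ q = W x * G x ^ q := fun x => by
    rw [ENNReal.mul_rpow_of_nonneg _ _ hq0.le, ← ENNReal.rpow_mul, inv_mul_cancel₀ hq0.ne',
      ENNReal.rpow_one]
  have hsecond : ∀ x, (W x ^ (-q⁻¹)) ^ q.conjExponent = W x ^ (-(q - 1)⁻¹) := fun x => by
    rw [← ENNReal.rpow_mul, Real.conjExponent]
    congr 1
    field_simp
  calc (∫⁻ x, G x ∂μ) ^ q
      ≤ ((∫⁻ x, W x * G x ^ q ∂μ) ^ (1 / q) *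
          (∫⁻ x, W x ^ (-(q - 1)⁻¹) ∂μ) ^ (1 / q.conjExponent)) ^ q := by
        rw [hsplit]
        gcongr
        have := ENNReal.lintegral_mul_le_Lp_mul_Lq μ hconj (f := fun x => W x ^ q⁻¹ * G x)
          (g := fun x => W x ^ (-q⁻¹)) ((hW.pow_const _).mul hG) (hW.pow_const _)
        simpa only [hfirst, hsecond] using this
    _ = (∫⁻ x, W x * G x ^ q ∂μ) * (∫⁻ x, W x ^ (-(q - 1)⁻¹) ∂μ) ^ (q - 1) := by
        rw [ENNReal.mul_rpow_of_nonneg _ _ hq0.le, ← ENNReal.rpow_mul, ← ENNReal.rpow_mul,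
          one_div_mul_cancel hq0.ne', ENNReal.rpow_one, Real.conjExponent]
        congr 2
        field_simp

/-- The `g**` of the statement, as an `ℝ≥0∞`-valued function of `G = ofReal ∘ g`. -/
noncomputable def averageFromZero (G : ℝ → ℝ≥0∞) (u : ℝ) : ℝ≥0∞ :=
  (ENNReal.ofReal u)⁻¹ * ∫⁻ s in Ioo 0 u, G s

theorem measurable_averageFromZero (G : ℝ → ℝ≥0∞) : Measurable (averageFromZero G) :=
  ENNReal.measurable_ofReal.inv.mul
    (Monotone.measurable fun _ _ huv => lintegral_mono_set (Ioo_subset_Ioo_right huv))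

theorem AntitoneOn.le_averageFromZero {G : ℝ → ℝ≥0∞} (hG : AntitoneOn G (Ioo 0 1)) {u : ℝ}
    (hu : u ∈ Ioo (0 : ℝ) 1) : G u ≤ averageFromZero G u := by
  rw [averageFromZero, ← ENNReal.mul_le_iff_le_inv (by simpa using hu.1) ofReal_ne_top]
  calc ENNReal.ofReal u * G u = ∫⁻ _ in Ioo 0 u, G u := by
        rw [setLIntegral_const, Real.volume_Ioo, sub_zero, mul_comm]
    _ ≤ ∫⁻ s in Ioo 0 u, G s := setLIntegral_mono' measurableSet_Ioo fun s hs =>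
        hG ⟨hs.1, hs.2.trans hu.2⟩ hu hs.2.le

theorem AntitoneOn.lintegral_Ioo_zero_one_le {G : ℝ → ℝ≥0∞} (hG : AntitoneOn G (Ioo 0 1))
    {u : ℝ} (hu : u ∈ Ioo (0 : ℝ) 1) :
    ∫⁻ s in Ioo 0 1, G s ≤ (∫⁻ s in Ioo 0 u, G s) + G u := by
  calc ∫⁻ s in Ioo 0 1, G s ≤ ∫⁻ s in Ioo 0 u ∪ Ico u 1, G s := by
        refine lintegral_mono_set fun s hs => ?_
        rcases lt_or_ge s u with h | h
        exacts [Or.inl ⟨hs.1, h⟩, Or.inr ⟨h, hs.2⟩]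
    _ ≤ (∫⁻ s in Ioo 0 u, G s) + ∫⁻ _ in Ico u 1, G u := by
        refine (lintegral_union_le _ _ _).trans (add_le_add_right ?_ _)
        exact setLIntegral_mono' measurableSet_Ico fun s hs =>
          hG hu ⟨hu.1.trans_le hs.1, hs.2⟩ hs.1
    _ ≤ (∫⁻ s in Ioo 0 u, G s) + G u := by
        rw [setLIntegral_const, Real.volume_Ico]
        gcongr
        exact mul_le_of_le_one_right' (ofReal_le_one.2 (by linarith [hu.1]))

theorem averageFromZero_rpow_le {q b : ℝ} (hq : 1 < q) (hbq : b < q - 1) {G : ℝ → ℝ≥0∞}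
    (hG : Measurable G) {u : ℝ} (hu : 0 < u) :
    averageFromZero G u ^ q ≤ ENNReal.ofReal ((1 - b / (q - 1)) ^ (1 - q) * u ^ (-1 - b)) *
      ∫⁻ s in Ioo 0 u, ENNReal.ofReal s ^ b * G s ^ q := by
  have hq1 : 0 < q - 1 := by linarith
  set c := b / (q - 1) with hc_def
  have hc : 0 < 1 - c := by rw [sub_pos, div_lt_one hq1]; exact hbq
  have hholder := ENNReal.lintegral_rpow_le_lintegral_mul_rpow_mul
    (μ := volume.restrict (Ioo 0 u)) hq hG.aemeasurable
    (W := fun s => ENNReal.ofReal s ^ b) (by fun_prop)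
    ((ae_restrict_iff' measurableSet_Ioo).2 (ae_of_all _ fun s hs => by simp [hs.1]))
    ((ae_restrict_iff' measurableSet_Ioo).2 (ae_of_all _ fun s hs => by simp [hs.1]))
  have hweight : ∫⁻ s in Ioo 0 u, (ENNReal.ofReal s ^ b) ^ (-(q - 1)⁻¹) =
      ENNReal.ofReal (u ^ (1 - c) / (1 - c)) := by
    simp_rw [← ENNReal.rpow_mul]
    rw [show b * -(q - 1)⁻¹ = -c by rw [hc_def]; ring, lintegral_Ioo_zero_rpow (by linarith) hu,
      neg_add_eq_sub]
  have hpower :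
      (u ^ (1 - c) / (1 - c)) ^ (q - 1) * u ^ (-q) = (1 - c) ^ (1 - q) * u ^ (-1 - b) := by
    rw [Real.div_rpow (by positivity) hc.le, ← Real.rpow_mul hu.le, div_mul_eq_mul_div,
      ← Real.rpow_add hu, div_eq_mul_inv, ← Real.rpow_neg hc.le, neg_sub, mul_comm]
    congr 2
    rw [hc_def]
    field_simp
    ring
  calc averageFromZero G u ^ q
      = ENNReal.ofReal (u ^ (-q)) * (∫⁻ s in Ioo 0 u, G s) ^ q := by
        rw [averageFromZero, ENNReal.mul_rpow_of_nonneg _ _ (by linarith), ENNReal.inv_rpow,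
          ← ENNReal.rpow_neg, ENNReal.ofReal_rpow_of_pos hu]
    _ ≤ ENNReal.ofReal (u ^ (-q)) * ((∫⁻ s in Ioo 0 u, ENNReal.ofReal s ^ b * G s ^ q) *
          ENNReal.ofReal (u ^ (1 - c) / (1 - c)) ^ (q - 1)) := by
        rw [← hweight]
        exact mul_le_mul_right hholder _
    _ = ENNReal.ofReal ((1 - c) ^ (1 - q) * u ^ (-1 - b)) *
          ∫⁻ s in Ioo 0 u, ENNReal.ofReal s ^ b * G s ^ q := by
        rw [ENNReal.ofReal_rpow_of_nonneg (by positivity) hq1.le, ← hpower,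
          ENNReal.ofReal_mul (by positivity)]
        ring

theorem lintegral_rpow_mul_averageFromZero_rpow_le {q a b : ℝ} (hq : 1 < q) (hab : a < b)
    (hbq : b < q - 1) {G : ℝ → ℝ≥0∞} (hG : Measurable G) :
    ∫⁻ u in Ioo 0 1, ENNReal.ofReal u ^ a * averageFromZero G u ^ q ≤
      ENNReal.ofReal ((1 - b / (q - 1)) ^ (1 - q) / (b - a)) *
        ∫⁻ u in Ioo 0 1, ENNReal.ofReal u ^ a * G u ^ q := by
  set κ := (1 - b / (q - 1)) ^ (1 - q)
  have hκ0 : 0 ≤ κ := by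
    refine Real.rpow_nonneg ?_ _
    rw [sub_nonneg, div_le_one (by linarith)]
    exact hbq.le
  have hpoint : ∀ u ∈ Ioo (0 : ℝ) 1,
      ENNReal.ofReal u ^ a * averageFromZero G u ^ q ≤ ENNReal.ofReal κ *
        (ENNReal.ofReal u ^ (a - 1 - b) * ∫⁻ s in Ioo 0 u, ENNReal.ofReal s ^ b * G s ^ q) := by
    intro u hu
    have hu0 : ENNReal.ofReal u ≠ 0 := by simpa using hu.1
    calc ENNReal.ofReal u ^ a * averageFromZero G u ^ q
        ≤ ENNReal.ofReal u ^ a * (ENNReal.ofReal (κ * u ^ (-1 - b)) *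
            ∫⁻ s in Ioo 0 u, ENNReal.ofReal s ^ b * G s ^ q) := by
          gcongr
          exact averageFromZero_rpow_le hq hbq hG hu.1
      _ = _ := by
          rw [ENNReal.ofReal_mul hκ0, ← ENNReal.ofReal_rpow_of_pos hu.1,
            show a - 1 - b = a + (-1 - b) by ring, ENNReal.rpow_add _ _ hu0 ofReal_ne_top]
          ring
  have htail : ∀ s ∈ Ioo (0 : ℝ) 1,
      ENNReal.ofReal s ^ b * G s ^ q * ∫⁻ u in Ioo s 1, ENNReal.ofReal u ^ (a - 1 - b) ≤
        ENNReal.ofReal (b - a)⁻¹ * (ENNReal.ofReal s ^ a * G s ^ q) := by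
    intro s hs
    have hs0 : ENNReal.ofReal s ≠ 0 := by simpa using hs.1
    calc ENNReal.ofReal s ^ b * G s ^ q * ∫⁻ u in Ioo s 1, ENNReal.ofReal u ^ (a - 1 - b)
        ≤ ENNReal.ofReal s ^ b * G s ^ q * ∫⁻ u in Ioi s, ENNReal.ofReal u ^ (a - 1 - b) := by
          gcongr
          exact Ioo_subset_Ioi_self
      _ = ENNReal.ofReal s ^ b * G s ^ q * ENNReal.ofReal (s ^ (a - b) * (b - a)⁻¹) := by
          rw [lintegral_Ioi_rpow_of_lt (by linarith) hs.1, show a - 1 - b + 1 = a - b by ring,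
            neg_div, ← div_neg, neg_sub, div_eq_mul_inv]
      _ = ENNReal.ofReal (b - a)⁻¹ * (ENNReal.ofReal s ^ a * G s ^ q) := by
          rw [ENNReal.ofReal_mul (by have := hs.1; positivity), ← ENNReal.ofReal_rpow_of_pos hs.1,
            show a = b + (a - b) by ring, ENNReal.rpow_add _ _ hs0 ofReal_ne_top]
          ring_nf
  calc ∫⁻ u in Ioo 0 1, ENNReal.ofReal u ^ a * averageFromZero G u ^ q
      ≤ ∫⁻ u in Ioo 0 1, ENNReal.ofReal κ *
          (ENNReal.ofReal u ^ (a - 1 - b) * ∫⁻ s in Ioo 0 u, ENNReal.ofReal s ^ b * G s ^ q) :=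
        setLIntegral_mono' measurableSet_Ioo hpoint
    _ = ENNReal.ofReal κ * ∫⁻ s in Ioo 0 1, ENNReal.ofReal s ^ b * G s ^ q *
          ∫⁻ u in Ioo s 1, ENNReal.ofReal u ^ (a - 1 - b) := by
        rw [lintegral_const_mul' _ _ ofReal_ne_top,
          lintegral_Ioo_mul_lintegral_Ioo_swap (by fun_prop) (by fun_prop)]
    _ ≤ ENNReal.ofReal κ * ∫⁻ s in Ioo 0 1,
          ENNReal.ofReal (b - a)⁻¹ * (ENNReal.ofReal s ^ a * G s ^ q) :=
        mul_le_mul_right (setLIntegral_mono' measurableSet_Ioo htail) _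
    _ = _ := by
        rw [lintegral_const_mul' _ _ ofReal_ne_top, ← mul_assoc, ← ENNReal.ofReal_mul hκ0,
          div_eq_mul_inv]

theorem ENNReal.toReal_le_toReal_and_le_mul_toReal {x y : ℝ≥0∞} {c : ℝ} (hc : 0 ≤ c)
    (hxy : x ≤ y) (hyx : y ≤ ENNReal.ofReal c * x) :
    x.toReal ≤ y.toReal ∧ y.toReal ≤ c * x.toReal := by
  rcases eq_or_ne x ⊤ with rfl | hx
  · simp [top_le_iff.1 hxy]
  have hcx : ENNReal.ofReal c * x ≠ ⊤ := mul_ne_top ofReal_ne_top hx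
  refine ⟨toReal_mono (ne_top_of_le_ne_top hcx hyx) hxy, ?_⟩
  simpa [toReal_ofReal hc] using toReal_mono hcx hyx

theorem setIntegral_Ioo_rpow_mul_rpow {g : ℝ → ℝ} (hg : Measurable g)
    (hpos : ∀ t ∈ Ioo (0 : ℝ) 1, 0 ≤ g t) {β q : ℝ} (hq : 0 ≤ q) :
    ∫ t in Ioo 0 1, (t ^ β * g t) ^ q =
      (∫⁻ t in Ioo 0 1, ENNReal.ofReal t ^ (β * q) * ENNReal.ofReal (g t) ^ q).toReal := by
  rw [← integral_toReal (by fun_prop) ((ae_restrict_iff' measurableSet_Ioo).2 (ae_of_all _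
    fun t ht => mul_lt_top (by rw [ofReal_rpow_of_pos ht.1]; exact ofReal_lt_top)
      (rpow_lt_top_of_nonneg hq ofReal_ne_top)))]
  refine setIntegral_congr_fun measurableSet_Ioo fun t ht => ?_
  rw [toReal_mul, ← toReal_rpow, ← toReal_rpow, toReal_ofReal ht.1.le, toReal_ofReal (hpos t ht),
    Real.mul_rpow (Real.rpow_nonneg ht.1.le β) (hpos t ht), ← Real.rpow_mul ht.1.le]

theorem setIntegral_Ioo_average_rpow {g : ℝ → ℝ} (hg : Measurable g)
    (hanti : AntitoneOn g (Ioo 0 1)) (hpos : ∀ t ∈ Ioo (0 : ℝ) 1, 0 ≤ g t) {α q : ℝ}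
    (hα : 0 < α) (hq : 0 < q) :
    ∫ t in Ioo 0 1, ((t ^ α)⁻¹ * ∫ s in Ioo 0 (t ^ α), g s) ^ q =
      (∫⁻ t in Ioo 0 1, averageFromZero (fun s => ENNReal.ofReal (g s)) (t ^ α) ^ q).toReal := by
  set G : ℝ → ℝ≥0∞ := fun s => ENNReal.ofReal (g s)
  have hmem : ∀ t ∈ Ioo (0 : ℝ) 1, t ^ α ∈ Ioo (0 : ℝ) 1 := fun t ht =>
    ⟨Real.rpow_pos_of_pos ht.1 α, Real.rpow_lt_one ht.1.le ht.2 hα⟩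
  have hpoint : ∀ t ∈ Ioo (0 : ℝ) 1, ((t ^ α)⁻¹ * ∫ s in Ioo 0 (t ^ α), g s) ^ q =
      (averageFromZero G (t ^ α) ^ q).toReal := by
    intro t ht
    rw [integral_eq_lintegral_of_nonneg_ae ((ae_restrict_iff' measurableSet_Ioo).2 (ae_of_all _
      fun s hs => hpos s ⟨hs.1, hs.2.trans (hmem t ht).2⟩)) hg.aestronglyMeasurable,
      averageFromZero, ← toReal_rpow, toReal_mul, toReal_inv, toReal_ofReal (hmem t ht).1.le]
  rw [setIntegral_congr_fun measurableSet_Ioo hpoint]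
  rcases eq_or_ne (∫⁻ s in Ioo 0 1, G s) ⊤ with htop | hfin
  · -- `g` is then not integrable on any `(0, v)`, and both sides are junk zeros.
    have hG : AntitoneOn G (Ioo 0 1) := fun x hx y hy hxy => ofReal_le_ofReal (hanti hx hy hxy)
    have hinfinite : ∀ t ∈ Ioo (0 : ℝ) 1, averageFromZero G (t ^ α) ^ q = ⊤ := by
      intro t ht
      have : ∫⁻ s in Ioo 0 (t ^ α), G s = ⊤ := by
        have hle := hG.lintegral_Ioo_zero_one_le (hmem t ht)
        rw [htop, top_le_iff, add_eq_top] at hle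
        exact hle.resolve_right ofReal_ne_top
      rw [averageFromZero, this, mul_top (by simp), top_rpow_of_pos hq]
    rw [setIntegral_congr_fun measurableSet_Ioo fun t ht => by rw [hinfinite t ht, toReal_top],
      setLIntegral_congr_fun measurableSet_Ioo hinfinite, integral_zero, setLIntegral_const,
      Real.volume_Ioo, top_mul (by simp), toReal_top]
  · refine integral_toReal
      (((measurable_averageFromZero G).comp (by fun_prop)).pow_const q).aemeasurable
      ((ae_restrict_iff' measurableSet_Ioo).2 (ae_of_all _ fun t ht => ?_))
    refine rpow_lt_top_of_nonneg hq.le (mul_ne_top (by simp [(hmem t ht).1]) ?_)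
    exact ne_top_of_le_ne_top hfin (lintegral_mono_set (Ioo_subset_Ioo_right (hmem t ht).2.le))

theorem exists_setIntegral_average_rpow_comparable {q r α β : ℝ} (hq : 1 < q) (hr : 1 ≤ r)
    (hrq : r < q) (hrα : r * α = 1) (hβ : β * q = r - 1) :
    ∃ K : ℝ, 0 < K ∧ ∀ g : ℝ → ℝ, Measurable g → AntitoneOn g (Ioo 0 1) →
      (∀ t ∈ Ioo (0 : ℝ) 1, 0 ≤ g t) →
      ∫ t in Ioo 0 1, (t ^ β * g t) ^ q ≤
          ∫ t in Ioo 0 1, ((t ^ α)⁻¹ * ∫ s in Ioo 0 (t ^ α), g s) ^ q ∧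
        ∫ t in Ioo 0 1, ((t ^ α)⁻¹ * ∫ s in Ioo 0 (t ^ α), g s) ^ q ≤
          K * ∫ t in Ioo 0 1, (t ^ β * g t) ^ q := by
  obtain ⟨b, hab, hbq⟩ := exists_between (show r - 1 < q - 1 by linarith)
  have hα : 0 < α := pos_of_mul_pos_right (hrα ▸ one_pos) (by linarith)
  have hκ : 0 < (1 - b / (q - 1)) ^ (1 - q) / (b - (r - 1)) := by
    have : 0 < 1 - b / (q - 1) := by rw [sub_pos, div_lt_one (by linarith)]; exact hbq
    have := sub_pos.2 hab
    positivity
  refine ⟨r * ((1 - b / (q - 1)) ^ (1 - q) / (b - (r - 1))), by positivity,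
    fun g hg hanti hpos => ?_⟩
  rw [setIntegral_Ioo_rpow_mul_rpow hg hpos (by linarith),
    setIntegral_Ioo_average_rpow hg hanti hpos hα (by linarith),
    lintegral_Ioo_zero_one_comp_rpow (by linarith) hrα (fun u => averageFromZero _ u ^ q), hβ]
  set G : ℝ → ℝ≥0∞ := fun s => ENNReal.ofReal (g s)
  have hG : AntitoneOn G (Ioo 0 1) := fun x hx y hy hxy => ofReal_le_ofReal (hanti hx hy hxy)
  refine ENNReal.toReal_le_toReal_and_le_mul_toReal (by positivity) ?_ ?_
  · calc ∫⁻ u in Ioo 0 1, ENNReal.ofReal u ^ (r - 1) * G u ^ q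
        ≤ ∫⁻ u in Ioo 0 1, ENNReal.ofReal u ^ (r - 1) * averageFromZero G u ^ q :=
          setLIntegral_mono' measurableSet_Ioo fun u hu => by
            gcongr
            exact hG.le_averageFromZero hu
      _ ≤ _ := le_mul_of_one_le_left' (one_le_ofReal.2 hr)
  · rw [ENNReal.ofReal_mul (by linarith), mul_assoc]
    gcongr
    exact lintegral_rpow_mul_averageFromZero_rpow_le hq hab hbq (by fun_prop)

/-- For `1 < p < n`, the quantity `‖g^{**}(t^{1/n'})‖_{L^{p'}(0,1)}` is equivalent to the
Lorentz norm `‖g‖_{L^{p'(n-1)/n, p'}(0,1)}`, for nonincreasing nonnegative `g` on `(0,1)`;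
here `g^{**}(u) = u⁻¹ ∫_0^u g` and `p' = p/(p-1)`, `n' = n/(n-1)`. -/
theorem optimal_range_norm_identification (n : ℕ) (hn : 2 ≤ n) (p : ℝ) (hp : 1 < p)
    (hpn : p < n) :
    ∃ c C : ℝ, 0 < c ∧ 0 < C ∧ ∀ g : ℝ → ℝ, Measurable g →
      AntitoneOn g (Set.Ioo (0:ℝ) 1) → (∀ t ∈ Set.Ioo (0:ℝ) 1, 0 ≤ g t) →
      c * (∫ t in Set.Ioo (0:ℝ) 1,
              (t ^ ((n:ℝ) / ((p / (p - 1)) * (n - 1)) - 1 / (p / (p - 1))) * g t)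
                ^ (p / (p - 1))) ^ (1 / (p / (p - 1))) ≤
        (∫ t in Set.Ioo (0:ℝ) 1,
            ((t ^ (((n:ℝ) - 1) / n))⁻¹ *
              ∫ s in Set.Ioo (0:ℝ) (t ^ (((n:ℝ) - 1) / n)), g s) ^ (p / (p - 1)))
          ^ (1 / (p / (p - 1)))
      ∧ (∫ t in Set.Ioo (0:ℝ) 1,
            ((t ^ (((n:ℝ) - 1) / n))⁻¹ *
              ∫ s in Set.Ioo (0:ℝ) (t ^ (((n:ℝ) - 1) / n)), g s) ^ (p / (p - 1)))
          ^ (1 / (p / (p - 1)))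
        ≤ C * (∫ t in Set.Ioo (0:ℝ) 1,
              (t ^ ((n:ℝ) / ((p / (p - 1)) * (n - 1)) - 1 / (p / (p - 1))) * g t)
                ^ (p / (p - 1))) ^ (1 / (p / (p - 1))) := by
  have hp1 : 0 < p - 1 := by linarith
  have hn1 : (0 : ℝ) < n - 1 := by
    have : (2 : ℝ) ≤ n := by exact_mod_cast hn
    linarith
  set q := p / (p - 1)
  have hq : 1 < q := (one_lt_div hp1).2 (by linarith)
  obtain ⟨K, hK, hbound⟩ := exists_setIntegral_average_rpow_comparable (r := n / (n - 1))
    (α := ((n : ℝ) - 1) / n) (β := (n : ℝ) / (q * (n - 1)) - 1 / q) hq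
    ((one_le_div hn1).2 (by linarith))
    (by rw [div_lt_div_iff₀ hn1 hp1]; nlinarith)
    (by field_simp) (by field_simp)
  refine ⟨1, K ^ (1 / q), one_pos, by positivity, fun g hg hanti hpos => ?_⟩
  obtain ⟨hlower, hupper⟩ := hbound g hg hanti hpos
  have hL : 0 ≤ ∫ t in Ioo (0 : ℝ) 1, (t ^ ((n : ℝ) / (q * (n - 1)) - 1 / q) * g t) ^ q :=
    setIntegral_nonneg measurableSet_Ioo fun t ht => by
      have := hpos t ht
      have := ht.1
      positivity
  have hexp : 0 ≤ 1 / q := by positivity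
  refine ⟨by rw [one_mul]; exact Real.rpow_le_rpow hL hlower hexp, ?_⟩
  rw [← Real.mul_rpow hK.le hL]
  exact Real.rpow_le_rpow (hL.trans hlower) hupper hexp
end

section
/- Let $X_1(I^{n-1})$ and $X_2(I^{n-1})$ be rearrangement invariant Banach function spaces. Then the mixed norm embedding $\mathcal{R}(X_1, L^\infty) \hookrightarrow \mathcal{R}(X_2, L^\infty)$ holds if and only if $X_1(I^{n-1}) \hookrightarrow X_2(I^{n-1})$. -/
/-!
Test the mixed embedding on `f x = g* (max x₀ x₁)`, where `g*` is the decreasing rearrangement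
of `g`. Whichever coordinate `k` is integrated out, one of `x₀, x₁` is the coordinate `y₀` of
`x̂_k`, so `ψ_k f ≤ g* (y₀)` because `g*` decreases; and `ψ₀ f = g* (y₀)` on the cube, since the
supremum over `x₀` is attained on `(0, y₀)`. As `y ↦ g* (y₀)` is equimeasurable with `g`, this
gives `‖g‖_{X₂} ≤ ‖f‖_{R(X₂)} ≤ C ‖f‖_{R(X₁)} ≤ C (n + 1) ‖g‖_{X₁}`. The converse is termwise.
-/
open MeasureTheory Set ENNReal NNReal

noncomputable def cube (m : ℕ) : Set (Fin m → ℝ) := Set.univ.pi fun _ => Set.Ioo (0:ℝ) 1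
noncomputable def μcube (m : ℕ) : Measure (Fin m → ℝ) := volume.restrict (cube m)
/-- Lebesgue measure on `(0,1)`. -/
noncomputable def μ01 : Measure ℝ := volume.restrict (Set.Ioo (0:ℝ) 1)

/-- Decreasing rearrangement of a nonnegative (extended-real-valued) function. -/
noncomputable def rearr {α : Type*} [MeasurableSpace α] (μ : Measure α) (f : α → ℝ≥0∞) (t : ℝ) : ℝ≥0∞ :=
  sInf {a : ℝ≥0∞ | μ {x | a < f x} ≤ ENNReal.ofReal t}

/-- A rearrangement invariant Banach function norm (on nonnegative measurable functions
with values in `[0,∞]`, in the sense of Bennett–Sharpley): properties (A1)–(A5) together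
with rearrangement invariance. -/
structure RINorm {α : Type*} [MeasurableSpace α] (μ : Measure α) where
  N : (α → ℝ≥0∞) → ℝ≥0∞
  eq_zero : ∀ f : α → ℝ≥0∞, Measurable f → (N f = 0 ↔ f =ᵐ[μ] 0)
  add_le : ∀ f g : α → ℝ≥0∞, Measurable f → Measurable g → N (f + g) ≤ N f + N g
  smul : ∀ (c : ℝ≥0) (f : α → ℝ≥0∞), N (fun x => c * f x) = c * N f
  mono : ∀ f g : α → ℝ≥0∞, (∀ᵐ x ∂μ, g x ≤ f x) → N g ≤ N f
  sup_seq : ∀ f : ℕ → α → ℝ≥0∞, (∀ j, Measurable (f j)) → Monotone f →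
    N (fun x => ⨆ j, f j x) = ⨆ j, N (f j)
  const_lt : N (fun _ => 1) < ⊤
  int_le : ∃ c : ℝ≥0∞, c < ⊤ ∧ ∀ f : α → ℝ≥0∞, Measurable f → ∫⁻ x, f x ∂μ ≤ c * N f
  ri : ∀ f g : α → ℝ≥0∞, Measurable f → Measurable g →
    (∀ a : ℝ≥0∞, μ {x | a < f x} = μ {x | a < g x}) → N f = N g

/-- `ψ_k(f, L^∞)(x̂_k) = esssup_{x_k ∈ I} f(x̂_k, x_k)`. -/
noncomputable def psiK {n : ℕ} (f : (Fin (n+1) → ℝ) → ℝ≥0∞) (k : Fin (n+1)) (y : Fin n → ℝ) : ℝ≥0∞ :=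
  essSup (fun s : ℝ => f (k.insertNth s y)) (volume.restrict (Set.Ioo (0:ℝ) 1))

/-- The mixed norm `‖f‖_{R(X,L^∞)} = ∑_k ‖ψ_k(f,L^∞)‖_{X(I^{n-1})}`. -/
noncomputable def mixedNorm {n : ℕ} (X : RINorm (μcube n)) (f : (Fin (n+1) → ℝ) → ℝ≥0∞) : ℝ≥0∞ :=
  ∑ k : Fin (n+1), X.N (psiK f k)

section Rearrangement

variable {α : Type*} [MeasurableSpace α] {μ : Measure α} {g : α → ℝ≥0∞}

lemma measure_lt_le_of_forall_gt {a c : ℝ≥0∞} (h : ∀ b, a < b → μ {x | b < g x} ≤ c) :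
    μ {x | a < g x} ≤ c := by
  rcases eq_or_lt_of_le (le_top : a ≤ ⊤) with rfl | ha
  · simp
  obtain ⟨u, hu_anti, hu_mem, hu_lim⟩ := exists_seq_strictAnti_tendsto' ha
  have hunion : {x | a < g x} = ⋃ m, {x | u m < g x} := by
    ext x
    simp only [mem_ofPred_eq, mem_iUnion]
    refine ⟨fun hx => (hu_lim.eventually (gt_mem_nhds hx)).exists, ?_⟩
    rintro ⟨m, hm⟩
    exact (hu_mem m).1.trans hm
  have hmono : Monotone fun m => {x | u m < g x} :=
    fun m m' hmm' x hx => (hu_anti.antitone hmm').trans_lt hx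
  rw [hunion, hmono.measure_iUnion]
  exact iSup_le fun m => h _ (hu_mem m).1

lemma lt_rearr_iff {a : ℝ≥0∞} {t : ℝ} :
    a < rearr μ g t ↔ ENNReal.ofReal t < μ {x | a < g x} := by
  unfold rearr
  refine ⟨fun h => not_le.mp fun ha => (sInf_le (show a ∈ _ from ha)).not_gt h, fun h => ?_⟩
  by_contra! hle
  refine h.not_ge (measure_lt_le_of_forall_gt fun b hab => ?_)
  obtain ⟨c, hc, hcb⟩ := sInf_lt_iff.mp (hle.trans_lt hab)
  exact (measure_mono fun x hx => hcb.le.trans_lt hx).trans hc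

lemma antitone_rearr : Antitone (rearr μ g) :=
  fun _ _ hst => sInf_le_sInf fun _ hb => hb.trans (ENNReal.ofReal_le_ofReal hst)

lemma μ01_setOf_lt_rearr [IsProbabilityMeasure μ] (a : ℝ≥0∞) :
    μ01 {t | a < rearr μ g t} = μ {x | a < g x} := by
  set d := μ {x | a < g x}
  have hd : d.toReal ≤ 1 :=
    ENNReal.toReal_le_of_le_ofReal zero_le_one (by simpa using prob_le_one)
  have hset : {t | a < rearr μ g t} ∩ Ioo 0 1 = Ioo 0 d.toReal := by
    ext t
    simp only [mem_inter_iff, mem_ofPred_eq, lt_rearr_iff, mem_Ioo]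
    constructor
    · rintro ⟨ht, ht0, -⟩
      exact ⟨ht0, (ENNReal.ofReal_lt_iff_lt_toReal ht0.le (measure_ne_top μ _)).mp ht⟩
    · rintro ⟨ht0, ht⟩
      exact ⟨(ENNReal.ofReal_lt_iff_lt_toReal ht0.le (measure_ne_top μ _)).mpr ht, ht0,
        ht.trans_le hd⟩
  rw [μ01, Measure.restrict_apply' measurableSet_Ioo, hset, Real.volume_Ioo, sub_zero,
    ENNReal.ofReal_toReal (measure_ne_top μ _)]

end Rearrangement

instance : IsProbabilityMeasure μ01 :=
  ⟨by simp [μ01]⟩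

lemma μcube_eq_pi (n : ℕ) : μcube n = Measure.pi fun _ => μ01 := by
  rw [μcube, cube, volume_pi, Measure.restrict_pi_pi]
  rfl

instance (n : ℕ) : IsProbabilityMeasure (μcube n) := by
  rw [μcube_eq_pi]
  infer_instance

lemma RINorm.N_rearr_comp_eval {n : ℕ} (X : RINorm (μcube n)) (i : Fin n)
    {g : (Fin n → ℝ) → ℝ≥0∞} (hg : Measurable g) :
    X.N (fun y => rearr (μcube n) g (y i)) = X.N g := by
  have hG : Measurable (rearr (μcube n) g) := antitone_rearr.measurable
  refine X.ri _ g (hG.comp (measurable_pi_apply i)) hg fun a => ?_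
  have heval : MeasurePreserving (fun y : Fin n → ℝ => y i) (μcube n) μ01 := by
    rw [μcube_eq_pi]
    exact measurePreserving_eval _ i
  rw [← μ01_setOf_lt_rearr (g := g) a]
  exact heval.measure_preimage (hG measurableSet_Ioi).nullMeasurableSet

lemma lt_essSup_iff_measure_ne_zero {β : Type*} [MeasurableSpace β] {ν : Measure β}
    {h : β → ℝ≥0∞} {a : ℝ≥0∞} : a < essSup h ν ↔ ν {s | a < h s} ≠ 0 := by
  have : essSup h ν ≤ a ↔ ∀ᵐ s ∂ν, h s ≤ a :=
    ⟨fun hle => (ENNReal.ae_le_essSup h).mono fun _ hs => hs.trans hle, essSup_le_of_ae_le a⟩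
  simp only [← not_le, this, ae_iff, ne_eq]

lemma measurable_psiK {n : ℕ} {f : (Fin (n + 1) → ℝ) → ℝ≥0∞} (hf : Measurable f)
    (k : Fin (n + 1)) : Measurable (psiK f k) := by
  refine measurable_of_Ioi fun a => ?_
  have hF : MeasurableSet {p : (Fin n → ℝ) × ℝ | a < f (k.insertNth p.2 p.1)} :=
    (hf.comp (by fun_prop)) measurableSet_Ioi
  have hpre : psiK f k ⁻¹' Ioi a = {y | μ01 {s | a < f (k.insertNth s y)} ≠ 0} := by
    ext y
    exact lt_essSup_iff_measure_ne_zero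
  rw [hpre]
  exact (measurable_measure_prodMk_left hF (measurableSet_singleton 0)).compl

lemma psiK_max_le {m : ℕ} {G : ℝ → ℝ≥0∞} (hG : Antitone G) (k : Fin (m + 2))
    (y : Fin (m + 1) → ℝ) : psiK (fun x => G (max (x 0) (x 1))) k y ≤ G (y 0) := by
  refine essSup_le_of_ae_le _ (Filter.Eventually.of_forall fun s => hG ?_)
  rcases eq_or_ne k 0 with rfl | hk
  · simp [Fin.insertNth_zero', Fin.cons_one]
  · rw [← Fin.succAbove_ne_zero_zero hk, Fin.insertNth_apply_succAbove]
    exact le_max_left _ _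

lemma le_psiK_max_zero {m : ℕ} (G : ℝ → ℝ≥0∞) {y : Fin (m + 1) → ℝ} (hy : y 0 ∈ Ioo 0 1) :
    G (y 0) ≤ psiK (fun x => G (max (x 0) (x 1))) 0 y := by
  have hpos : volume.restrict (Ioo 0 (y 0)) ≠ 0 := by simp [Real.volume_Ioo, hy.1]
  have hconst : (fun s => G (max s (y 0))) =ᵐ[volume.restrict (Ioo 0 (y 0))] fun _ => G (y 0) := by
    filter_upwards [ae_restrict_mem measurableSet_Ioo] with s hs
    rw [max_eq_right hs.2.le]
  calc G (y 0) = essSup (fun s => G (max s (y 0))) (volume.restrict (Ioo 0 (y 0))) := by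
        rw [essSup_congr_ae hconst, essSup_const _ hpos]
    _ ≤ psiK (fun x => G (max (x 0) (x 1))) 0 y := by
        simp only [psiK, Fin.insertNth_zero', Fin.cons_zero, Fin.cons_one]
        exact essSup_mono_measure' (Measure.restrict_mono (Ioo_subset_Ioo_right hy.2.le) le_rfl)

lemma RINorm.N_le_of_mixedNorm_le {m : ℕ} {X₁ X₂ : RINorm (μcube (m + 1))} {C : ℝ≥0}
    (hC : ∀ f, Measurable f → mixedNorm X₂ f ≤ C * mixedNorm X₁ f)
    {g : (Fin (m + 1) → ℝ) → ℝ≥0∞} (hg : Measurable g) :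
    X₂.N g ≤ (C * (m + 2) : ℝ≥0) * X₁.N g := by
  set G := rearr (μcube (m + 1)) g
  have hG : Antitone G := antitone_rearr
  set f : (Fin (m + 2) → ℝ) → ℝ≥0∞ := fun x => G (max (x 0) (x 1))
  have hf : Measurable f := hG.measurable.comp (by fun_prop)
  have hcube : MeasurableSet (cube (m + 1)) := MeasurableSet.univ_pi fun _ => measurableSet_Ioo
  have hlower : X₂.N g ≤ mixedNorm X₂ f := calc
    X₂.N g = X₂.N fun y => G (y 0) := (X₂.N_rearr_comp_eval 0 hg).symm
    _ ≤ X₂.N (psiK f 0) := X₂.mono _ _ <| by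
      filter_upwards [ae_restrict_mem hcube] with y hy
      exact le_psiK_max_zero G (hy 0 (mem_univ _))
    _ ≤ mixedNorm X₂ f :=
      Finset.single_le_sum (f := fun k => X₂.N (psiK f k)) (fun _ _ => zero_le)
        (Finset.mem_univ 0)
  have hupper : mixedNorm X₁ f ≤ (m + 2) * X₁.N g := calc
    mixedNorm X₁ f ≤ ∑ _k : Fin (m + 2), X₁.N fun y => G (y 0) :=
      Finset.sum_le_sum fun k _ => X₁.mono _ _ (Filter.Eventually.of_forall (psiK_max_le hG k))
    _ = (m + 2) * X₁.N g := by
      rw [X₁.N_rearr_comp_eval 0 hg, Finset.sum_const, Finset.card_univ, Fintype.card_fin,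
        nsmul_eq_mul]
      push_cast
      rfl
  calc X₂.N g ≤ C * mixedNorm X₁ f := hlower.trans (hC f hf)
    _ ≤ C * ((m + 2) * X₁.N g) := by gcongr
    _ = (C * (m + 2) : ℝ≥0) * X₁.N g := by
      push_cast
      ring

lemma mixedNorm_le_of_N_le {n : ℕ} {X₁ X₂ : RINorm (μcube n)} {C : ℝ≥0}
    (hC : ∀ g, Measurable g → X₂.N g ≤ C * X₁.N g)
    {f : (Fin (n + 1) → ℝ) → ℝ≥0∞} (hf : Measurable f) :
    mixedNorm X₂ f ≤ C * mixedNorm X₁ f := by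
  rw [mixedNorm, mixedNorm, Finset.mul_sum]
  exact Finset.sum_le_sum fun k _ => hC _ (measurable_psiK hf k)

/-- Embeddings between mixed norm spaces `R(X₁,L^∞) ↪ R(X₂,L^∞)` hold if and only if
`X₁(I^{n-1}) ↪ X₂(I^{n-1})` (ambient dimension `n+1 ≥ 2`). -/
theorem mixed_embedding_iff (n : ℕ) (hn : 1 ≤ n)
    (X₁ X₂ : RINorm (μcube n)) :
    (∃ C : ℝ≥0, ∀ f : (Fin (n+1) → ℝ) → ℝ≥0∞, Measurable f →
        mixedNorm X₂ f ≤ C * mixedNorm X₁ f)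
      ↔ (∃ C : ℝ≥0, ∀ g : (Fin n → ℝ) → ℝ≥0∞, Measurable g → X₂.N g ≤ C * X₁.N g) := by
  obtain ⟨m, rfl⟩ := Nat.exists_eq_add_of_le' hn
  exact ⟨fun ⟨C, hC⟩ => ⟨C * (m + 2), fun g hg => RINorm.N_le_of_mixedNorm_le hC hg⟩,
    fun ⟨C, hC⟩ => ⟨C, fun f hf => mixedNorm_le_of_N_le hC hf⟩⟩
end
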